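/- Let d ≥ 2, r ≥ 11, let i be a coordinate (1 ≤ i ≤ d), and let s be an integer with |s| ≤ r−3. Then the set A = {x ∈ ℤ^d : ‖x‖₁ ∈ {r−1, r−2} and x_i > s} is nonempty and induces a connected subgraph of the grid graph: any two points of A are joined by a path all of whose vertices lie in A. -/

import Mathlib

/-- The `ℓ1`-norm of a point of `ℤ^d`. -/
def norm1 {d : ℕ} (x : Fin d → ℤ) : ℤ := ∑ i, |x i|

/-- Grid adjacency in `ℤ^d`: `u` and `v` are adjacent iff `‖u - v‖₁ = 1`. -/
def Adj {d : ℕ} (u v : Fin d → ℤ) : Prop := norm1 (u - v) = 1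

/-!
Every point of `A` can be joined inside `A` to the pole `(r - 1) eᵢ`. A point of the outer shell
`‖x‖₁ = r - 1` other than the pole moves, in two grid steps through the inner shell, to a point of
the outer shell whose `i`-th coordinate is larger by one: if `xᵢ ≥ 0`, first shrink some other
nonzero coordinate and then raise `xᵢ`; if `xᵢ < 0`, first raise `xᵢ` (which shrinks the norm) and
then enlarge some other coordinate, which exists since `d ≥ 2`. The `i`-th coordinate never
decreases, so the half-space condition `xᵢ > s` is kept, and after `r - 1 - xᵢ` rounds we reach the
pole. A point of the inner shell reaches the outer shell by enlarging a coordinate other than `i`.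
-/

open Finset Function

lemma exists_list_path_of_reachable_induce {V : Type*} {G : SimpleGraph V} {A : Set V}
    {a b : V} {ha : a ∈ A} {hb : b ∈ A} (h : (G.induce A).Reachable ⟨a, ha⟩ ⟨b, hb⟩) :
    ∃ (L : List V) (hL : L ≠ []), L.Nodup ∧ L.IsChain G.Adj ∧ L.head hL = a ∧
      L.getLast hL = b ∧ ∀ x ∈ L, x ∈ A := by
  classical
  obtain ⟨w⟩ := h
  let p := w.toPath
  refine ⟨p.1.support.map Subtype.val, fun h => p.1.support_ne_nil (List.map_eq_nil_iff.mp h),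
    p.2.support_nodup.map Subtype.val_injective,
    List.isChain_map_of_isChain Subtype.val (fun _ _ h => h) p.1.isChain_adj_support,
    by rw [List.head_map, SimpleGraph.Walk.head_support],
    by rw [List.getLast_map, SimpleGraph.Walk.getLast_support], ?_⟩
  simp only [List.mem_map]
  rintro _ ⟨y, -, rfl⟩
  exact y.2

lemma reachable_induce_of_adj {V : Type*} {G : SimpleGraph V} {A : Set V} {a b : V}
    (ha : a ∈ A) (hb : b ∈ A) (h : G.Adj a b) : (G.induce A).Reachable ⟨a, ha⟩ ⟨b, hb⟩ :=
  (SimpleGraph.induce_adj.mpr h).reachable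

lemma Int.exists_abs_add_eq_abs_add_one (z : ℤ) : ∃ e : ℤ, |e| = 1 ∧ |z + e| = |z| + 1 := by
  rcases le_or_gt 0 z with h | h
  · exact ⟨1, by norm_num, by grind⟩
  · exact ⟨-1, by norm_num, by grind⟩

lemma Int.exists_abs_add_eq_abs_sub_one {z : ℤ} (hz : z ≠ 0) :
    ∃ e : ℤ, |e| = 1 ∧ |z + e| = |z| - 1 := by
  rcases lt_or_gt_of_ne hz with h | h
  · exact ⟨1, by norm_num, by grind⟩
  · exact ⟨-1, by norm_num, by grind⟩

section Norm

variable {d : ℕ}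

lemma norm1_neg (x : Fin d → ℤ) : norm1 (-x) = norm1 x := by
  simp [norm1]

lemma norm1_single (i : Fin d) (c : ℤ) : norm1 (Pi.single i c) = |c| := by
  rw [norm1, Finset.sum_eq_single i (fun j _ hj => by simp [hj]) (by simp)]
  simp

lemma norm1_eq_abs_add_sum_erase (x : Fin d → ℤ) (i : Fin d) :
    norm1 x = |x i| + ∑ j ∈ univ.erase i, |x j| :=
  (add_sum_erase _ _ (mem_univ i)).symm

lemma norm1_update (x : Fin d → ℤ) (j : Fin d) (v : ℤ) :
    norm1 (update x j v) = norm1 x - |x j| + |v| := by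
  rw [norm1_eq_abs_add_sum_erase _ j, norm1_eq_abs_add_sum_erase x j, update_self,
    sum_congr rfl fun k hk => by rw [update_of_ne (ne_of_mem_erase hk)]]
  ring

lemma abs_le_norm1 (x : Fin d → ℤ) (i : Fin d) : |x i| ≤ norm1 x :=
  single_le_sum (f := fun j => |x j|) (fun _ _ => abs_nonneg _) (mem_univ i)

lemma exists_ne_ne_zero_of_abs_lt_norm1 {x : Fin d → ℤ} {i : Fin d} (h : |x i| < norm1 x) :
    ∃ j ≠ i, x j ≠ 0 := by
  rw [norm1_eq_abs_add_sum_erase x i] at h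
  obtain ⟨j, hj, hxj⟩ := exists_ne_zero_of_sum_ne_zero (ne_of_gt (by linarith) :
    ∑ j ∈ univ.erase i, |x j| ≠ 0)
  exact ⟨j, ne_of_mem_erase hj, abs_ne_zero.mp hxj⟩

lemma eq_single_of_norm1_eq_abs {x : Fin d → ℤ} {i : Fin d} (h : norm1 x = |x i|) :
    x = Pi.single i (x i) := by
  ext j
  rcases eq_or_ne j i with rfl | hj
  · simp
  · have hsum : ∑ k ∈ univ.erase i, |x k| = 0 := by
      linarith [norm1_eq_abs_add_sum_erase x i]
    have hxj : |x j| ≤ 0 := hsum ▸ single_le_sum (f := fun k => |x k|)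
      (fun _ _ => abs_nonneg _) (mem_erase.mpr ⟨hj, mem_univ j⟩)
    rw [Pi.single_eq_of_ne hj]
    exact abs_nonpos_iff.mp hxj

end Norm

section Moves

variable {d : ℕ}

lemma adj_update_add (x : Fin d → ℤ) (j : Fin d) {e : ℤ} (he : |e| = 1) :
    Adj x (update x j (x j + e)) := by
  have hdiff : update x j (x j + e) - x = Pi.single j e := by
    ext k
    rcases eq_or_ne k j with rfl | hk
    · simp
    · simp [hk]
  rw [Adj, ← norm1_neg, neg_sub, hdiff, norm1_single, he]

lemma exists_adj_norm1_add_one (x : Fin d → ℤ) (j : Fin d) :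
    ∃ y, Adj x y ∧ norm1 y = norm1 x + 1 ∧ ∀ k ≠ j, y k = x k := by
  obtain ⟨e, he, hxe⟩ := Int.exists_abs_add_eq_abs_add_one (x j)
  exact ⟨_, adj_update_add x j he, by rw [norm1_update, hxe]; ring,
    fun k hk => update_of_ne hk _ _⟩

lemma exists_adj_norm1_sub_one {x : Fin d → ℤ} {j : Fin d} (hx : x j ≠ 0) :
    ∃ y, Adj x y ∧ norm1 y = norm1 x - 1 ∧ ∀ k ≠ j, y k = x k := by
  obtain ⟨e, he, hxe⟩ := Int.exists_abs_add_eq_abs_sub_one hx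
  exact ⟨_, adj_update_add x j he, by rw [norm1_update, hxe]; ring,
    fun k hk => update_of_ne hk _ _⟩

lemma exists_adj_adj_norm1_eq_of_lt_norm1 (hd : 2 ≤ d) {a : Fin d → ℤ} {i : Fin d}
    (ha : a i < norm1 a) :
    ∃ b c, Adj a b ∧ Adj b c ∧ norm1 b = norm1 a - 1 ∧ norm1 c = norm1 a ∧
      a i ≤ b i ∧ c i = a i + 1 := by
  rcases lt_or_ge (a i) 0 with hneg | hnonneg
  · obtain ⟨j, hji⟩ := Fintype.exists_ne_of_one_lt_card (by simp; omega) i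
    have hb : norm1 (update a i (a i + 1)) = norm1 a - 1 := by
      rw [norm1_update]
      grind
    obtain ⟨c, hbc, hc, hci⟩ := exists_adj_norm1_add_one (update a i (a i + 1)) j
    refine ⟨_, c, adj_update_add a i (by norm_num), hbc, hb, by omega, by simp, ?_⟩
    rw [hci i hji.symm, update_self]
  · obtain ⟨j, hji, haj⟩ := exists_ne_ne_zero_of_abs_lt_norm1 (by rwa [abs_of_nonneg hnonneg])
    obtain ⟨b, hab, hb, hbi⟩ := exists_adj_norm1_sub_one haj
    have hbi : b i = a i := hbi i hji.symm
    refine ⟨b, update b i (b i + 1), hab, adj_update_add b i (by norm_num), hb, ?_, hbi.ge, ?_⟩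
    · rw [norm1_update, hb, hbi]
      grind
    · rw [update_self, hbi]

end Moves

def gridGraph (d : ℕ) : SimpleGraph (Fin d → ℤ) where
  Adj := Adj
  symm := ⟨fun u v (h : norm1 (u - v) = 1) => by rwa [← norm1_neg, neg_sub] at h⟩
  loopless := ⟨fun u (h : norm1 (u - u) = 1) => by simp [norm1] at h⟩

def annulusAbove (d : ℕ) (r : ℤ) (i : Fin d) (s : ℤ) : Set (Fin d → ℤ) :=
  {x | (norm1 x = r - 1 ∨ norm1 x = r - 2) ∧ s < x i}

section Annulus

variable {d : ℕ} {r s : ℤ} {i : Fin d}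

lemma single_mem_annulusAbove (hr : 1 ≤ r) (hsr : s < r - 1) :
    Pi.single i (r - 1) ∈ annulusAbove d r i s :=
  ⟨Or.inl (by rw [norm1_single, abs_of_nonneg (by omega)]), by simpa using hsr⟩

lemma reachable_single_of_norm1_eq (hd : 2 ≤ d) (hr : 1 ≤ r) (hsr : s < r - 1) (n : ℕ) :
    ∀ a (ha : a ∈ annulusAbove d r i s), norm1 a = r - 1 → a i = r - 1 - n →
      ((gridGraph d).induce (annulusAbove d r i s)).Reachable ⟨a, ha⟩
        ⟨_, single_mem_annulusAbove hr hsr⟩ := by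
  induction n with
  | zero =>
    intro a ha hnorm hai
    have hpole : norm1 a = |a i| := by
      rw [hnorm, hai, abs_of_nonneg (by omega), Nat.cast_zero, sub_zero]
    obtain rfl : a = Pi.single i (r - 1) := by
      rw [eq_single_of_norm1_eq_abs hpole, hai, Nat.cast_zero, sub_zero]
    rfl
  | succ n ih =>
    intro a ha hnorm hai
    obtain ⟨b, c, hab, hbc, hb, hc, hbi, hci⟩ :=
      exists_adj_adj_norm1_eq_of_lt_norm1 hd (i := i) (a := a) (by omega)
    have hbA : b ∈ annulusAbove d r i s := ⟨Or.inr (by omega), by linarith [ha.2]⟩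
    have hcA : c ∈ annulusAbove d r i s := ⟨Or.inl (by omega), by linarith [ha.2]⟩
    exact (reachable_induce_of_adj ha hbA hab).trans ((reachable_induce_of_adj hbA hcA hbc).trans
      (ih c hcA (by omega) (by push_cast at hai ⊢; omega)))

lemma reachable_single (hd : 2 ≤ d) (hr : 1 ≤ r) (hsr : s < r - 1) {a : Fin d → ℤ}
    (ha : a ∈ annulusAbove d r i s) :
    ((gridGraph d).induce (annulusAbove d r i s)).Reachable ⟨a, ha⟩
      ⟨_, single_mem_annulusAbove hr hsr⟩ := by
  have hai (x : Fin d → ℤ) : x i ≤ norm1 x := (le_abs_self _).trans (abs_le_norm1 x i)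
  rcases ha.1 with hnorm | hnorm
  · exact reachable_single_of_norm1_eq hd hr hsr (r - 1 - a i).toNat a ha hnorm
      (by have := hai a; omega)
  · obtain ⟨j, hji⟩ := Fintype.exists_ne_of_one_lt_card (by simp; omega) i
    obtain ⟨b, hab, hb, hbi⟩ := exists_adj_norm1_add_one a j
    have hbA : b ∈ annulusAbove d r i s := ⟨Or.inl (by omega), hbi i hji.symm ▸ ha.2⟩
    exact (reachable_induce_of_adj ha hbA hab).trans (reachable_single_of_norm1_eq hd hr hsr
      (r - 1 - b i).toNat b hbA (by omega) (by have := hai b; omega))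

lemma preconnected_induce_annulusAbove (hd : 2 ≤ d) (hr : 1 ≤ r) (hsr : s < r - 1) :
    ((gridGraph d).induce (annulusAbove d r i s)).Preconnected := fun a b =>
  (reachable_single hd hr hsr a.2).trans (reachable_single hd hr hsr b.2).symm

end Annulus

theorem statement6_general (d : ℕ) (hd : 2 ≤ d) (r : ℤ) (i : Fin d)
    (s : ℤ) (hs : |s| ≤ r - 3) :
    letI A : Set (Fin d → ℤ) :=
      {x | (norm1 x = r - 1 ∨ norm1 x = r - 2) ∧ s < x i}
    A.Nonempty ∧
      ∀ a ∈ A, ∀ b ∈ A,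
        ∃ (L : List (Fin d → ℤ)) (h : L ≠ []),
          L.Nodup ∧ L.Chain' Adj ∧ L.head h = a ∧ L.getLast h = b ∧
          ∀ x ∈ L, x ∈ A := by
  obtain ⟨hs_lower, hs_upper⟩ := abs_le.mp hs
  have hr : 1 ≤ r := by omega
  have hsr : s < r - 1 := by omega
  refine ⟨⟨_, single_mem_annulusAbove hr hsr⟩, fun a ha b hb => ?_⟩
  exact exists_list_path_of_reachable_induce
    (preconnected_induce_annulusAbove hd hr hsr ⟨a, ha⟩ ⟨b, hb⟩)

theorem statement6 (d : ℕ) (hd : 2 ≤ d) (r : ℤ) (hr : 11 ≤ r) (i : Fin d)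
    (s : ℤ) (hs : |s| ≤ r - 3) :
    letI A : Set (Fin d → ℤ) :=
      {x | (norm1 x = r - 1 ∨ norm1 x = r - 2) ∧ s < x i}
    A.Nonempty ∧
      ∀ a ∈ A, ∀ b ∈ A,
        ∃ (L : List (Fin d → ℤ)) (h : L ≠ []),
          L.Nodup ∧ L.Chain' Adj ∧ L.head h = a ∧ L.getLast h = b ∧
          ∀ x ∈ L, x ∈ A :=
  statement6_general d hd r i s hs
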